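/- Let G = (V, E) be a quasi-acyclic 2-path-bounded oriented graph without loops, multiple edges and triangles. Then η(G) ≥ 𝔯𝔥(G). -/

import Mathlib

/-- An oriented graph: finite nonempty sets of vertices and edges with
origin and tail maps. -/
structure OrientedGraph where
  V : Type
  E : Type
  [fintypeV : Fintype V]
  [fintypeE : Fintype E]
  [nonemptyV : Nonempty V]
  [nonemptyE : Nonempty E]
  o : E → V
  t : E → V

attribute [instance] OrientedGraph.fintypeV OrientedGraph.fintypeE
  OrientedGraph.nonemptyV OrientedGraph.nonemptyE

namespace OrientedGraph

variable (G : OrientedGraph)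

/-- `G.IsPath p u v` : the edge sequence `p` is a path from `u` to `v`
(consecutive edges are composable; paths of length 0 at any vertex are allowed). -/
def IsPath (p : List G.E) (u v : G.V) : Prop :=
  List.Chain' (fun e f => G.t e = G.o f) p ∧
  ((p = [] ∧ u = v) ∨
    ∃ h : p ≠ [], u = G.o (p.head h) ∧ v = G.t (p.getLast h))

/-- The label of an edge sequence: the product of the labels of its edges
(the empty sequence maps to `1`). -/
def labelProd {M : Type} [Monoid M] (l : G.E → M) (s : List G.E) : M :=
  (s.map l).prod

/-- The diagram `(G, l)` is commutative: any two paths with the same origin and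
the same tail have equal labels. -/
def IsCommutative {M : Type} [Monoid M] (l : G.E → M) : Prop :=
  ∀ (u v : G.V) (p₁ p₂ : List G.E),
    G.IsPath p₁ u v → G.IsPath p₂ u v → G.labelProd l p₁ = G.labelProd l p₂

/-- A complete system of relations for `G`: for every monoid `M` and every
labeling `l : E → M`, the diagram `(G, l)` is commutative iff all relations hold. -/
def IsComplete (R : Finset (List G.E × List G.E)) : Prop :=
  ∀ (M : Type) [Monoid M], ∀ l : G.E → M,
    G.IsCommutative l ↔ ∀ r ∈ R, G.labelProd l r.1 = G.labelProd l r.2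

/-- A minimal complete system of relations: no proper subset is complete. -/
def IsMinimalComplete (R : Finset (List G.E × List G.E)) : Prop :=
  G.IsComplete R ∧ ∀ R' : Finset (List G.E × List G.E), R' ⊂ R → ¬ G.IsComplete R'

/-- The commutativity rank `η(G)`: the minimal cardinality of a complete
system of relations for `G`. -/
noncomputable def eta : ℕ :=
  sInf {n : ℕ | ∃ R : Finset (List G.E × List G.E), G.IsComplete R ∧ R.card = n}

/-- `S'` is obtained from `S` by one multiplication. -/
def MulStep (S S' : Set (List G.E)) : Prop :=
  ∃ s ∈ S, ∃ s' ∈ S, S' = S ∪ {s ++ s'}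

/-- `G.mCost S S'` : the minimal number of multiplications needed to obtain `S'`
from `S` (`⊤` if impossible). -/
noncomputable def mCost (S S' : Set (List G.E)) : ℕ∞ :=
  sInf {k : ℕ∞ | ∃ n : ℕ, k = n ∧ ∃ f : ℕ → Set (List G.E),
    f 0 = S ∧ f n = S' ∧ ∀ i < n, G.MulStep (f i) (f (i + 1))}

/-- `S_R`: the set of all edge sequences appearing in the relations of `R`. -/
def relSet (R : Finset (List G.E × List G.E)) : Set (List G.E) :=
  {s | ∃ r ∈ R, s = r.1 ∨ s = r.2}

/-- `ℰ`: the empty sequence together with all one-edge sequences. -/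
def baseSet : Set (List G.E) :=
  {s | s = [] ∨ ∃ e : G.E, s = [e]}

/-- `m(R)`: the minimal number of multiplications needed to build all sequences
appearing in `R`, starting from `ℰ`. -/
noncomputable def mRel (R : Finset (List G.E × List G.E)) : ℕ∞ :=
  sInf {k : ℕ∞ | ∃ S : Set (List G.E), G.relSet R ⊆ S ∧ k = G.mCost G.baseSet S}

/-- The multiplication rank `ν(G)`. -/
noncomputable def nu : ℕ∞ :=
  sInf {k : ℕ∞ | ∃ R : Finset (List G.E × List G.E), G.IsComplete R ∧ k = G.mRel R}

/-- A 4-tuple of edges `(a, b, c, d)` forms a rhomboid. -/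
def IsRhomboid (r : G.E × G.E × G.E × G.E) : Prop :=
  G.o r.1 = G.o r.2.2.1 ∧ G.t r.2.1 = G.t r.2.2.2 ∧
  G.t r.1 = G.o r.2.1 ∧ G.t r.2.2.1 = G.o r.2.2.2 ∧
  G.o r.1 ≠ G.t r.1 ∧ G.o r.1 ≠ G.o r.2.2.2 ∧ G.o r.1 ≠ G.t r.2.2.2 ∧
  G.t r.1 ≠ G.o r.2.2.2 ∧ G.t r.1 ≠ G.t r.2.2.2 ∧ G.o r.2.2.2 ≠ G.t r.2.2.2

/-- Two rhomboids `(a, b, c, d)` and `(a', b', c', d')` are disjoint. -/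
def RhDisjoint (r r' : G.E × G.E × G.E × G.E) : Prop :=
  (r.1 ≠ r'.1 ∨ r.2.1 ≠ r'.2.1) ∧
  (r.1 ≠ r'.2.2.1 ∨ r.2.1 ≠ r'.2.2.2) ∧
  (r.2.2.1 ≠ r'.2.2.1 ∨ r.2.2.2 ≠ r'.2.2.2) ∧
  (r.2.2.1 ≠ r'.1 ∨ r.2.2.2 ≠ r'.2.1)

/-- `𝔯𝔥(G)`: the maximal cardinality of a family of pairwise disjoint rhomboids in `G`. -/
noncomputable def rhNum : ℕ :=
  sSup {n : ℕ | ∃ F : Finset (G.E × G.E × G.E × G.E),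
    (∀ r ∈ F, G.IsRhomboid r) ∧
    (∀ r ∈ F, ∀ r' ∈ F, r ≠ r' → G.RhDisjoint r r') ∧ F.card = n}

/-- `𝔏(G)`: the number of loops of `G`. -/
noncomputable def loopCount : ℕ :=
  Nat.card {e : G.E // G.o e = G.t e}

/-- `G` is quasi-acyclic: no directed cycle visiting two or more distinct vertices. -/
def QuasiAcyclic : Prop :=
  ∀ u v : G.V, u ≠ v →
    ∀ p q : List G.E, G.IsPath p u v → G.IsPath q v u → False

/-- `G` is 2-path-bounded: every oriented path avoiding loop edges has length at most 2. -/
def TwoPathBounded : Prop :=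
  ∀ (p : List G.E) (u v : G.V), G.IsPath p u v →
    (∀ e ∈ p, G.o e ≠ G.t e) → p.length ≤ 2

/-- `G` has a pair of multiple edges. -/
def HasMultipleEdges : Prop :=
  ∃ e e' : G.E, e ≠ e' ∧ G.t e = G.t e' ∧ G.o e = G.o e' ∧ G.t e ≠ G.o e

/-- `G` has a triangle. -/
def HasTriangle : Prop :=
  ∃ a b c : G.E, G.o a = G.o b ∧ G.t b = G.o c ∧ G.t c = G.t a ∧
    G.o a ≠ G.t a ∧ G.o b ≠ G.t b ∧ G.o c ≠ G.t c

/-- `G` has no loops. -/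
def NoLoops : Prop := ∀ e : G.E, G.o e ≠ G.t e

/-- Every edge occurring on either side of the relation `r` is a loop. -/
def AllLoops (r : List G.E × List G.E) : Prop :=
  (∀ e ∈ r.1, G.o e = G.t e) ∧ (∀ e ∈ r.2, G.o e = G.t e)

/-- Both sides of the relation `r` contain at least one non-loop edge. -/
def BothSidesNonLoop (r : List G.E × List G.E) : Prop :=
  (∃ e ∈ r.1, G.o e ≠ G.t e) ∧ (∃ e ∈ r.2, G.o e ≠ G.t e)

end OrientedGraph

/-- The triploid `T(n₁, n₂, n₃, n₀, e)`. -/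
def Triploid (n₁ n₂ n₃ n₀ e : ℕ) (hn₁ : 0 < n₁) (he : n₂ * (n₁ + n₃) ≤ e)
    (he₀ : 0 < e) : OrientedGraph where
  V := Fin n₀ ⊕ Fin n₁ ⊕ Fin n₂ ⊕ Fin n₃
  E := (Fin n₁ × Fin n₂) ⊕ (Fin n₂ × Fin n₃) ⊕ Fin (e - n₂ * (n₁ + n₃))
  nonemptyV := ⟨Sum.inr (Sum.inl ⟨0, hn₁⟩)⟩
  nonemptyE := by
    by_cases h : n₂ * (n₁ + n₃) < e
    · exact ⟨Sum.inr (Sum.inr ⟨0, by omega⟩)⟩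
    · have h2 : 0 < n₂ := by
        rcases Nat.eq_zero_or_pos n₂ with h0 | h0
        · exfalso; subst h0; simp at h; omega
        · exact h0
      exact ⟨Sum.inl (⟨0, hn₁⟩, ⟨0, h2⟩)⟩
  o := Sum.elim (fun p => Sum.inr (Sum.inl p.1))
        (Sum.elim (fun p => Sum.inr (Sum.inr (Sum.inl p.1)))
          (fun _ => Sum.inr (Sum.inl ⟨0, hn₁⟩)))
  t := Sum.elim (fun p => Sum.inr (Sum.inr (Sum.inl p.2)))
        (Sum.elim (fun p => Sum.inr (Sum.inr (Sum.inr p.2)))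
          (fun _ => Sum.inr (Sum.inl ⟨0, hn₁⟩)))

/-!
In such a graph two distinct parallel paths are exactly the two sides `[a, b]`, `[c, d]` of a
rhomboid, so the rhomboid relations form a complete system. Let `R` be any complete system.
Label the edges in the free monoid modulo the congruence that keeps the length, is trivial on
words of length `≤ 1` and identifies words of length two along a relation `r`. Taking for `r`
the rhomboid relations shows that the relations of `R` preserve length and are trivial in
length `≤ 1`; taking for `r` the relations of `R` then shows that the two sides of every
rhomboid are joined by a chain of relations of `R`.

For pairwise disjoint rhomboids, the sides `x ≠ y` are then pairwise disjoint pairs of vertices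
that are connected in the graph on words whose edges are the relations of `R`. The vectors
`single x 1 - single y 1` are linearly independent and lie in the span of the `|R|` vectors
attached to the relations, so there are at most `|R|` rhomboids.
-/

open Finsupp Submodule Module

theorem Finsupp.single_sub_single_mem_span_of_eqvGen {α R : Type*} [Ring R] {H : Set (α × α)}
    {a b : α} (h : Relation.EqvGen (fun x y => (x, y) ∈ H) a b) :
    single a (1 : R) - single b 1 ∈
      span R ((fun p => single p.1 (1 : R) - single p.2 1) '' H) := by
  induction h with
  | rel x y hxy => exact subset_span ⟨(x, y), hxy, rfl⟩
  | refl => simp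
  | symm x y _ ih => simpa using neg_mem ih
  | trans x y z _ _ ihxy ihyz => simpa using add_mem ihxy ihyz

theorem Finsupp.linearIndependent_single_sub_single {ι α R : Type*} [Ring R] {x y : ι → α}
    (hne : ∀ i, x i ≠ y i) (hdisj : ∀ i j, i ≠ j → x i ≠ x j ∧ x i ≠ y j) :
    LinearIndependent R fun i => single (x i) (1 : R) - single (y i) 1 := by
  classical
  refine linearIndependent_iff'.2 fun s g hg i hi => ?_
  have hxi := DFunLike.congr_fun hg (x i)
  rw [finsetSum_apply, Finset.sum_eq_single i] at hxi
  · simpa [hne i] using hxi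
  · intro j _ hji
    simp [(hdisj j i hji).1, (hdisj i j hji.symm).2.symm]
  · exact fun h => absurd hi h

theorem Finset.card_le_card_of_forall_eqvGen {ι α : Type*} {F : Finset ι} {H : Finset (α × α)}
    {x y : ι → α} (hne : ∀ i ∈ F, x i ≠ y i)
    (hdisj : ∀ i ∈ F, ∀ j ∈ F, i ≠ j → x i ≠ x j ∧ x i ≠ y j)
    (hconn : ∀ i ∈ F, Relation.EqvGen (fun a b => (a, b) ∈ H) (x i) (y i)) :
    F.card ≤ H.card := by
  classical
  set δ : α × α → α →₀ ℚ := fun p => single p.1 1 - single p.2 1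
  have hli : LinearIndependent ℚ fun i : F => δ (x i, y i) :=
    linearIndependent_single_sub_single (fun i => hne i i.2)
      fun i j hij => hdisj i i.2 j j.2 (Subtype.coe_ne_coe.2 hij)
  have hspan :
      span ℚ (Set.range fun i : F => δ (x i, y i)) ≤ span ℚ (H.image δ : Set _) := by
    rw [span_le, Finset.coe_image]
    rintro _ ⟨i, rfl⟩
    exact single_sub_single_mem_span_of_eqvGen (hconn i i.2)
  calc F.card = finrank ℚ (span ℚ (Set.range fun i : F => δ (x i, y i))) := by
        rw [finrank_span_eq_card hli, Fintype.card_coe]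
    _ ≤ finrank ℚ (span ℚ (H.image δ : Set _)) := Submodule.finrank_mono hspan
    _ ≤ (H.image δ).card := finrank_span_finset_le_card _
    _ ≤ H.card := card_image_le

def lengthTwoCon {α : Type*} (r : List α → List α → Prop) : Con (FreeMonoid α) where
  r x y := x.length = y.length ∧ (x.length ≤ 1 → x = y) ∧
    (x.length = 2 → Relation.EqvGen r x.toList y.toList)
  iseqv :=
    { refl := fun _ => ⟨rfl, fun _ => rfl, fun _ => .refl _⟩
      symm := fun ⟨hl, he, hr⟩ =>
        ⟨hl.symm, fun h => (he (hl ▸ h)).symm, fun h => (hr (hl ▸ h)).symm⟩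
      trans := fun ⟨hl, he, hr⟩ ⟨hl', he', hr'⟩ =>
        ⟨hl.trans hl', fun h => (he h).trans (he' (hl ▸ h)),
          fun h => (hr h).trans _ _ _ (hr' (hl ▸ h))⟩ }
  mul' := by
    rintro w x y z ⟨hl, he, hr⟩ ⟨hl', he', hr'⟩
    simp only [FreeMonoid.length_mul]
    refine ⟨by omega, fun h => by rw [he (by omega), he' (by omega)], fun h => ?_⟩
    obtain hw | hw | hw : w.length = 0 ∨ w.length = 1 ∨ w.length = 2 := by omega
    · obtain rfl := FreeMonoid.length_eq_zero.1 hw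
      obtain rfl := he (by omega)
      simpa using hr' (by omega)
    · rw [he (by omega), he' (by omega)]
      exact .refl _
    · obtain rfl := FreeMonoid.length_eq_zero.1 (show y.length = 0 by omega)
      obtain rfl := he' (by omega)
      simpa using hr hw

lemma lengthTwoCon_ofList {α : Type*} {r : List α → List α → Prop} {s s' : List α}
    (hs : r s s') (hl : s.length = s'.length) (h₁ : s.length ≤ 1 → s = s') :
    lengthTwoCon r (FreeMonoid.ofList s) (FreeMonoid.ofList s') :=
  ⟨hl, h₁, fun _ => .rel _ _ hs⟩

namespace OrientedGraph

variable (G : OrientedGraph)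

@[simp]
lemma isPath_nil_iff {u v : G.V} : G.IsPath [] u v ↔ u = v := by
  simp [IsPath]
  exact fun _ => List.isChain_nil

@[simp]
lemma isPath_singleton_iff {e : G.E} {u v : G.V} :
    G.IsPath [e] u v ↔ u = G.o e ∧ v = G.t e := by
  simp [IsPath]
  exact fun _ _ => List.isChain_singleton e

@[simp]
lemma isPath_pair_iff {e f : G.E} {u v : G.V} :
    G.IsPath [e, f] u v ↔ G.t e = G.o f ∧ u = G.o e ∧ v = G.t f := by
  simp [IsPath]
  exact fun _ _ => List.isChain_pair

open Classical in
noncomputable def rhomboidRels : Finset (List G.E × List G.E) :=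
  (Finset.univ.filter G.IsRhomboid).image fun ρ => ([ρ.1, ρ.2.1], [ρ.2.2.1, ρ.2.2.2])

lemma mem_rhomboidRels {r : List G.E × List G.E} :
    r ∈ G.rhomboidRels ↔ ∃ a b c d, G.IsRhomboid (a, b, c, d) ∧ r = ([a, b], [c, d]) := by
  simp [rhomboidRels, eq_comm]

variable {G}

lemma QuasiAcyclic.not_twoCycle (hqa : G.QuasiAcyclic) (hnl : G.NoLoops) {e f : G.E}
    (hef : G.t e = G.o f) (hfe : G.t f = G.o e) : False :=
  hqa _ _ (hnl e) [e] [f] (by simp) (by simp [hef, hfe])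

lemma not_isPath_cons_self (hnl : G.NoLoops) (hqa : G.QuasiAcyclic) (hpb : G.TwoPathBounded)
    {e : G.E} {p : List G.E} {u : G.V} (hp : G.IsPath (e :: p) u u) : False := by
  have hlen := hpb _ _ _ hp fun e _ => hnl e
  match p, hp with
  | [], hp =>
    obtain ⟨hu, hu'⟩ := G.isPath_singleton_iff.1 hp
    exact hnl e (hu ▸ hu')
  | [f], hp =>
    obtain ⟨hef, hu, hu'⟩ := G.isPath_pair_iff.1 hp
    exact hqa.not_twoCycle hnl hef (hu ▸ hu').symm
  | _ :: _ :: _, _ => simp at hlen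

lemma eq_of_isPath_singleton (hnl : G.NoLoops) (hme : ¬ G.HasMultipleEdges) {e f : G.E}
    {u v : G.V} (he : G.IsPath [e] u v) (hf : G.IsPath [f] u v) : e = f := by
  simp only [isPath_singleton_iff] at he hf
  by_contra hef
  exact hme ⟨e, f, hef, he.2.symm.trans hf.2, he.1.symm.trans hf.1, (hnl e).symm⟩

lemma not_isPath_singleton_of_isPath_pair (hnl : G.NoLoops) (htr : ¬ G.HasTriangle)
    {e f g : G.E} {u v : G.V} (he : G.IsPath [e] u v) (hfg : G.IsPath [f, g] u v) : False := by
  simp only [isPath_singleton_iff, isPath_pair_iff] at he hfg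
  exact htr ⟨e, f, g, he.1.symm.trans hfg.2.1, hfg.1, hfg.2.2.symm.trans he.2,
    hnl e, hnl f, hnl g⟩

lemma eq_or_mem_rhomboidRels_of_isPath_pair (hnl : G.NoLoops) (hqa : G.QuasiAcyclic)
    (hme : ¬ G.HasMultipleEdges) {a b c d : G.E} {u v : G.V} (hab : G.IsPath [a, b] u v)
    (hcd : G.IsPath [c, d] u v) : [a, b] = [c, d] ∨ ([a, b], [c, d]) ∈ G.rhomboidRels := by
  simp only [isPath_pair_iff] at hab hcd
  obtain ⟨hab, rfl, rfl⟩ := hab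
  obtain ⟨hcd, hac, hbd⟩ := hcd
  by_cases heq : a = c ∧ b = d
  · simp [heq]
  refine .inr (G.mem_rhomboidRels.2
    ⟨a, b, c, d, ⟨hac, hbd, hab, hcd, hnl a, ?_, ?_, ?_, ?_, hnl d⟩, rfl⟩)
  · exact fun h => hnl c ((hac.symm.trans h).trans hcd.symm)
  · exact fun h => hqa.not_twoCycle hnl hab (hbd.trans h.symm)
  · intro h
    by_cases hac' : a = c
    · subst hac'
      exact hme ⟨b, d, fun hbd' => heq ⟨rfl, hbd'⟩, hbd, hab.symm.trans h, (hnl b).symm⟩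
    · exact hme ⟨a, c, hac', h.trans hcd.symm, hac, (hnl a).symm⟩
  · exact fun h => hnl b (hab.symm.trans (h.trans hbd.symm))

variable (G) in
def ParallelPathsAreRhomboids : Prop :=
  ∀ ⦃p q : List G.E⦄ ⦃u v : G.V⦄, G.IsPath p u v → G.IsPath q u v →
    p = q ∨ (p, q) ∈ G.rhomboidRels

theorem parallelPathsAreRhomboids (hnl : G.NoLoops) (hqa : G.QuasiAcyclic)
    (hpb : G.TwoPathBounded) (hme : ¬ G.HasMultipleEdges) (htr : ¬ G.HasTriangle) :
    G.ParallelPathsAreRhomboids := by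
  intro p q u v hp hq
  have hlp := hpb _ _ _ hp fun e _ => hnl e
  have hlq := hpb _ _ _ hq fun e _ => hnl e
  match p, q, hp, hq with
  | [], [], _, _ => exact .inl rfl
  | [], _ :: _, hp, hq =>
    exact (not_isPath_cons_self hnl hqa hpb (G.isPath_nil_iff.1 hp ▸ hq)).elim
  | _ :: _, [], hp, hq =>
    exact (not_isPath_cons_self hnl hqa hpb (G.isPath_nil_iff.1 hq ▸ hp)).elim
  | [e], [f], hp, hq => exact .inl (by rw [eq_of_isPath_singleton hnl hme hp hq])
  | [_], [_, _], hp, hq => exact (not_isPath_singleton_of_isPath_pair hnl htr hp hq).elim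
  | [_, _], [_], hp, hq => exact (not_isPath_singleton_of_isPath_pair hnl htr hq hp).elim
  | [_, _], [_, _], hp, hq => exact eq_or_mem_rhomboidRels_of_isPath_pair hnl hqa hme hp hq
  | _ :: _ :: _ :: _, _, _, _ => simp at hlp
  | _, _ :: _ :: _ :: _, _, _ => simp at hlq

lemma IsRhomboid.isPath {a b c d : G.E} (h : G.IsRhomboid (a, b, c, d)) :
    G.IsPath [a, b] (G.o a) (G.t b) ∧ G.IsPath [c, d] (G.o a) (G.t b) := by
  obtain ⟨hac, hbd, hab, hcd, -⟩ := h
  simp [hac, hbd, hab, hcd]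

lemma isComplete_rhomboidRels (h : G.ParallelPathsAreRhomboids) :
    G.IsComplete G.rhomboidRels := by
  refine fun M _ l => ⟨fun hl r hr => ?_, fun hR u v p q hp hq => ?_⟩
  · obtain ⟨a, b, c, d, hρ, rfl⟩ := G.mem_rhomboidRels.1 hr
    exact hl _ _ _ _ hρ.isPath.1 hρ.isPath.2
  · rcases h hp hq with rfl | hpq
    exacts [rfl, hR _ hpq]

open FreeMonoid

lemma labelProd_mk'_comp_of (c : Con (FreeMonoid G.E)) (s : List G.E) :
    G.labelProd (c.mk' ∘ of) s = c.mk' (ofList s) := by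
  rw [labelProd, ← lift_ofList, lift_restrict]

lemma IsComplete.con_of_isComplete {R R' : Finset (List G.E × List G.E)} (hR : G.IsComplete R)
    (hR' : G.IsComplete R') (c : Con (FreeMonoid G.E))
    (hc : ∀ r ∈ R, c (ofList r.1) (ofList r.2)) :
    ∀ r ∈ R', c (ofList r.1) (ofList r.2) := by
  have hlabel (s s' : List G.E) : c (ofList s) (ofList s') ↔
      G.labelProd (c.mk' ∘ of) s = G.labelProd (c.mk' ∘ of) s' := by
    rw [labelProd_mk'_comp_of, labelProd_mk'_comp_of, Con.coe_mk', Con.eq]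
  simp only [hlabel] at hc ⊢
  exact (hR' _ _).1 ((hR _ _).2 hc)

theorem card_le_card_of_isComplete (h : G.ParallelPathsAreRhomboids)
    {R : Finset (List G.E × List G.E)} (hR : G.IsComplete R)
    {F : Finset (G.E × G.E × G.E × G.E)} (hF : ∀ ρ ∈ F, G.IsRhomboid ρ)
    (hFdisj : ∀ ρ ∈ F, ∀ ρ' ∈ F, ρ ≠ ρ' → G.RhDisjoint ρ ρ') :
    F.card ≤ R.card := by
  have hrh := G.isComplete_rhomboidRels h
  have hRlen : ∀ r ∈ R,
      lengthTwoCon (fun s s' => (s, s') ∈ G.rhomboidRels) (ofList r.1) (ofList r.2) := by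
    refine hrh.con_of_isComplete hR _ fun r hr => ?_
    obtain ⟨a, b, c, d, -, rfl⟩ := G.mem_rhomboidRels.1 hr
    exact lengthTwoCon_ofList hr rfl (by simp)
  have hRcon : ∀ r ∈ R, lengthTwoCon (fun s s' => (s, s') ∈ R) (ofList r.1) (ofList r.2) :=
    fun r hr => lengthTwoCon_ofList hr (hRlen r hr).1 (hRlen r hr).2.1
  have hconn : ∀ r ∈ G.rhomboidRels, Relation.EqvGen (fun s s' => (s, s') ∈ R) r.1 r.2 := by
    intro r hr
    refine (hR.con_of_isComplete hrh _ hRcon r hr).2.2 ?_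
    obtain ⟨a, b, c, d, -, rfl⟩ := G.mem_rhomboidRels.1 hr
    rfl
  refine Finset.card_le_card_of_forall_eqvGen (x := fun ρ => [ρ.1, ρ.2.1])
    (y := fun ρ => [ρ.2.2.1, ρ.2.2.2]) (fun ρ hρ hxy => ?_) (fun ρ hρ ρ' hρ' hne => ?_)
    fun ρ hρ => ?_
  · obtain ⟨-, -, -, hcd, -, -, -, htd, -⟩ := hF ρ hρ
    simp only [List.cons.injEq] at hxy
    exact htd (hxy.1 ▸ hcd)
  · obtain ⟨h₁, h₂, -⟩ := hFdisj ρ hρ ρ' hρ' hne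
    exact ⟨by simpa [← not_and_or] using h₁, by simpa [← not_and_or] using h₂⟩
  · exact hconn _ (G.mem_rhomboidRels.2 ⟨_, _, _, _, hF ρ hρ, rfl⟩)

theorem rhNum_le_eta (h : G.ParallelPathsAreRhomboids) : G.rhNum ≤ G.eta := by
  -- `rhomboidRels` keeps `eta` from being the junk value `sInf ∅ = 0`.
  refine le_csInf ⟨_, _, G.isComplete_rhomboidRels h, rfl⟩ ?_
  rintro _ ⟨R, hR, rfl⟩
  refine csSup_le ⟨0, ∅, by simp, by simp, rfl⟩ ?_
  rintro _ ⟨F, hF, hFdisj, rfl⟩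
  exact G.card_le_card_of_isComplete h hR hF hFdisj

end OrientedGraph

/-- Theorem: if `G` is quasi-acyclic, 2-path-bounded, without loops, multiple edges
and triangles, then `η(G) ≥ 𝔯𝔥(G)`. -/
theorem eta_ge_rhNum_of_noLoops (G : OrientedGraph) (hnl : G.NoLoops) (hqa : G.QuasiAcyclic)
    (hpb : G.TwoPathBounded) (hme : ¬ G.HasMultipleEdges) (htr : ¬ G.HasTriangle) :
    G.rhNum ≤ G.eta :=
  G.rhNum_le_eta (OrientedGraph.parallelPathsAreRhomboids hnl hqa hpb hme htr)
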